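/- Let M be a maximum matching in a bipartite graph G such that the digraph D(M) is acyclic. Then every maximum matching in G arises from M by a finite sequence of edge exchanges. -/

import Mathlib

variable {V : Type*}

/-- `M` is a matching in `G`: a set of edges of `G` that are pairwise disjoint. -/
def IsMatchingSet (G : SimpleGraph V) (M : Set (Sym2 V)) : Prop :=
  M ⊆ G.edgeSet ∧ ∀ e ∈ M, ∀ f ∈ M, e ≠ f → ∀ v : V, v ∈ e → v ∉ f

/-- `V(M)`: the set of vertices covered by the matching `M`. -/
def matVerts (M : Set (Sym2 V)) : Set V := {v | ∃ e ∈ M, v ∈ e}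

/-- `M` is a maximum matching in `G`. -/
def IsMaximumMatching (G : SimpleGraph V) (M : Set (Sym2 V)) : Prop :=
  IsMatchingSet G M ∧ ∀ M', IsMatchingSet G M' → M'.ncard ≤ M.ncard

/-- `M` is uniquely restricted: no matching distinct from `M` covers the same vertices. -/
def UniquelyRestricted (G : SimpleGraph V) (M : Set (Sym2 V)) : Prop :=
  ∀ M', IsMatchingSet G M' → matVerts M' = matVerts M → M' = M

/-- `M` is a perfect matching of `G`. -/
def IsPerfectMatchingSet (G : SimpleGraph V) (M : Set (Sym2 V)) : Prop :=
  IsMatchingSet G M ∧ matVerts M = Set.univ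

/-- `A, B` form a bipartition of `G`. -/
def IsBipartition (G : SimpleGraph V) (A B : Set V) : Prop :=
  Disjoint A B ∧ A ∪ B = Set.univ ∧
    ∀ ⦃u v : V⦄, G.Adj u v → (u ∈ A ∧ v ∈ B) ∨ (u ∈ B ∧ v ∈ A)

/-- `I` is an independent set in `G`. -/
def IsIndepSet (G : SimpleGraph V) (I : Set V) : Prop :=
  ∀ u ∈ I, ∀ v ∈ I, ¬ G.Adj u v

/-- `I` is a maximum independent set in `G`. -/
def IsMaximumIndepSet (G : SimpleGraph V) (I : Set V) : Prop :=
  IsIndepSet G I ∧ ∀ J, IsIndepSet G J → J.ncard ≤ I.ncard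

/-- The arcs of the digraph `D(M)`: edges not in `M` oriented from `A` to `B`,
edges of `M` oriented from `B` to `A`. -/
def DMarc (G : SimpleGraph V) (A B : Set V) (M : Set (Sym2 V)) (u v : V) : Prop :=
  G.Adj u v ∧ ((u ∈ A ∧ v ∈ B ∧ s(u, v) ∉ M) ∨ (u ∈ B ∧ v ∈ A ∧ s(u, v) ∈ M))

/-- The digraph `D(M)` is acyclic. -/
def DMAcyclic (G : SimpleGraph V) (A B : Set V) (M : Set (Sym2 V)) : Prop :=
  ∀ v : V, ¬ Relation.TransGen (DMarc G A B M) v v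

/-- `V⁺(M)`: vertices reachable in `D(M)` from an `A`-vertex uncovered by `M`. -/
def Vplus (G : SimpleGraph V) (A B : Set V) (M : Set (Sym2 V)) : Set V :=
  {v | ∃ a ∈ A, a ∉ matVerts M ∧ Relation.ReflTransGen (DMarc G A B M) a v}

/-- `V⁻(M)`: vertices from which a `B`-vertex uncovered by `M` is reachable in `D(M)`. -/
def Vminus (G : SimpleGraph V) (A B : Set V) (M : Set (Sym2 V)) : Set V :=
  {v | ∃ b ∈ B, b ∉ matVerts M ∧ Relation.ReflTransGen (DMarc G A B M) v b}

/-- Given a linear ordering `l` of an independent set, `Mσ G l` is the set of edges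
`y·p(y)` where `p(y)` is the first vertex of `l` adjacent to `y`. -/
def Msigma (G : SimpleGraph V) (l : List V) : Set (Sym2 V) :=
  {e | ∃ (i : Fin l.length) (y : V), e = s(y, l.get i) ∧ G.Adj (l.get i) y ∧
      ∀ j : Fin l.length, (j : ℕ) < (i : ℕ) → ¬ G.Adj (l.get j) y}

/-- `l` is an accessibility ordering of `I`: it enumerates `I` without repetition
and `Mσ` is a matching. -/
def IsAccessibilityOrdering (G : SimpleGraph V) (I : Set V) (l : List V) : Prop :=
  l.Nodup ∧ {v | v ∈ l} = I ∧ IsMatchingSet G (Msigma G l)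

/-- A partial accessibility ordering: an accessibility ordering of a subset of `I`. -/
def IsPartialAccessibilityOrdering (G : SimpleGraph V) (I : Set V) (l : List V) : Prop :=
  l.Nodup ∧ {v | v ∈ l} ⊆ I ∧ IsMatchingSet G (Msigma G l)

/-- `c` is an `M`-alternating cycle: of every two adjacent edges exactly one is in `M`. -/
def IsAlternatingCycle (G : SimpleGraph V) (M : Set (Sym2 V)) {v : V} (c : G.Walk v v) : Prop :=
  c.IsCycle ∧ (c.edges ++ c.edges.take 1).Chain' (fun e f => e ∈ M ↔ f ∉ M)

/-- `M'` arises from `M` by a single edge exchange. -/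
def EdgeExchange (G : SimpleGraph V) (A B : Set V) (M M' : Set (Sym2 V)) : Prop :=
  (∃ a a' b' : V, a ∈ A ∧ a ∉ matVerts M ∧ s(a', b') ∈ M ∧ G.Adj a b' ∧
      M' = (M \ {s(a', b')}) ∪ {s(a, b')}) ∨
  (∃ b a' b' : V, b ∈ B ∧ b ∉ matVerts M ∧ s(a', b') ∈ M ∧ G.Adj a' b ∧
      M' = (M \ {s(a', b')}) ∪ {s(a', b)})

/-!
Walk from `M` towards a maximum matching `M'` through maximum matchings `N` with
`N \ M' ⊆ M` and `M ∩ M' ⊆ N`. While `N ≠ M'`, some vertex `x` is covered by `M'` but not by `N`: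
otherwise `N` and `M'` cover the same vertices, and every vertex of `N ∆ M'` has a
`D(M)`-successor in `N ∆ M'` (along its `M' \ N`-edge if it lies in `A`, along its `N \ M'`-edge,
which lies in `M`, if it lies in `B`), which is impossible in a finite acyclic digraph.
The `M'`-partner `w` of `x` is covered by `N`, as `N` is maximum, and exchanging the `N`-edge at
`w` for `xw` is an edge exchange that decreases `|N \ M'|`.
-/

open Relation

lemma eq_empty_of_forall_exists_rel_of_acyclic {α : Type*} [Finite α] {r : α → α → Prop}
    (hr : ∀ a, ¬ TransGen r a a) {S : Set α} (hS : ∀ a ∈ S, ∃ b ∈ S, r a b) : S = ∅ := by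
  refine Set.eq_empty_of_forall_notMem fun a ha => ?_
  have : IsTrans α (flip (TransGen r)) := ⟨fun _ _ _ hab hbc => hbc.trans hab⟩
  have : Std.Irrefl (flip (TransGen r)) := ⟨hr⟩
  obtain ⟨m, hm, hmin⟩ :=
    (Finite.wellFounded_of_trans_of_irrefl (flip (TransGen r))).has_min S ⟨a, ha⟩
  obtain ⟨b, hb, hmb⟩ := hS m hm
  exact hmin b hb (.single hmb)

lemma sdiff_singleton_union_singleton_sdiff {α : Type*} {s t : Set α} {a b : α} (hb : b ∈ t) :
    (s \ {a} ∪ {b}) \ t = (s \ t) \ {a} := by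
  ext c
  by_cases hcb : c = b
  · subst hcb
    simp [hb]
  · simp [hcb, and_right_comm]

section Matchings

variable {G : SimpleGraph V} {N N' : Set (Sym2 V)} {x w z : V}

lemma IsMatchingSet.mono (hN : IsMatchingSet G N) (h : N' ⊆ N) : IsMatchingSet G N' :=
  ⟨h.trans hN.1, fun e he f hf => hN.2 e (h he) f (h hf)⟩

lemma IsMatchingSet.eq_of_mem (hN : IsMatchingSet G N) {e f : Sym2 V} (he : e ∈ N) (hf : f ∈ N)
    {v : V} (hve : v ∈ e) (hvf : v ∈ f) : e = f :=
  by_contra fun hef => hN.2 e he f hf hef v hve hvf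

lemma IsMatchingSet.insert (hN : IsMatchingSet G N) (hxw : G.Adj x w) (hx : x ∉ matVerts N)
    (hw : w ∉ matVerts N) : IsMatchingSet G (insert s(x, w) N) := by
  have hfree : ∀ f ∈ N, ∀ v ∈ s(x, w), v ∉ f := by
    rintro f hf v hv hvf
    rcases Sym2.mem_iff.mp hv with rfl | rfl
    exacts [hx ⟨f, hf, hvf⟩, hw ⟨f, hf, hvf⟩]
  refine ⟨Set.insert_subset hxw hN.1, ?_⟩
  rintro e (rfl | he) f (rfl | hf) hef v hve hvf
  · exact hef rfl
  · exact hfree f hf v hve hvf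
  · exact hfree e he v hvf hve
  · exact hN.2 e he f hf hef v hve hvf

lemma matVerts_mono (h : N' ⊆ N) : matVerts N' ⊆ matVerts N :=
  fun _ ⟨e, he, hv⟩ => ⟨e, h he, hv⟩

lemma matVerts_insert (x w : V) (N : Set (Sym2 V)) :
    matVerts (insert s(x, w) N) = {x, w} ∪ matVerts N := by
  ext v
  simp [matVerts, or_assoc, eq_comm]

lemma eq_empty_of_matVerts_eq_empty (h : matVerts N = ∅) : N = ∅ :=
  Set.eq_empty_of_forall_notMem fun e he => h.subset ⟨e, he, Sym2.out_fst_mem e⟩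

lemma IsMatchingSet.ncard_matVerts [Finite V] (hN : IsMatchingSet G N) :
    (matVerts N).ncard = 2 * N.ncard := by
  induction N, Set.toFinite N using Set.Finite.induction_on with
  | empty => simp [matVerts]
  | @insert e N heN _ ih =>
    induction e using Sym2.ind with
    | _ x w =>
    have hxw : x ≠ w := G.ne_of_adj (hN.1 (Set.mem_insert _ _))
    have hdisj : Disjoint ({x, w} : Set V) (matVerts N) := by
      rw [Set.disjoint_left]
      rintro v hv ⟨f, hf, hvf⟩
      exact hN.2 _ (Set.mem_insert _ _) f (Set.mem_insert_of_mem _ hf)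
        (fun h => heN (h ▸ hf)) v (Sym2.mem_iff.mpr hv) hvf
    rw [matVerts_insert, Set.ncard_union_eq hdisj, Set.ncard_pair hxw,
      ih (hN.mono (Set.subset_insert _ _)), Set.ncard_insert_of_notMem heN]
    ring

lemma IsMatchingSet.matVerts_sdiff_subset (hN : IsMatchingSet G N)
    (hV : matVerts N ⊆ matVerts N') : matVerts (N \ N') ⊆ matVerts (N' \ N) := by
  rintro v ⟨e, ⟨heN, heN'⟩, hve⟩
  obtain ⟨f, hfN', hvf⟩ := hV ⟨e, heN, hve⟩
  refine ⟨f, ⟨hfN', fun hfN => heN' ?_⟩, hvf⟩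
  rwa [hN.eq_of_mem heN hfN hve hvf]

lemma IsMaximumMatching.ncard_eq (hN : IsMaximumMatching G N) (hN' : IsMaximumMatching G N') :
    N.ncard = N'.ncard :=
  le_antisymm (hN'.2 _ hN.1) (hN.2 _ hN'.1)

lemma IsMaximumMatching.of_ncard_eq (hN : IsMaximumMatching G N) (hN' : IsMatchingSet G N')
    (h : N'.ncard = N.ncard) : IsMaximumMatching G N' :=
  ⟨hN', fun _ h' => h ▸ hN.2 _ h'⟩

lemma IsMaximumMatching.mem_matVerts_of_adj [Finite V] (hN : IsMaximumMatching G N)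
    (hxw : G.Adj x w) (hx : x ∉ matVerts N) : w ∈ matVerts N := by
  by_contra hw
  have hxwN : s(x, w) ∉ N := fun h => hx ⟨_, h, Sym2.mem_mk_left x w⟩
  have := hN.2 _ (hN.1.insert hxw hx hw)
  rw [Set.ncard_insert_of_notMem hxwN] at this
  omega

lemma IsMaximumMatching.exchange [Finite V] (hN : IsMaximumMatching G N) (hxw : G.Adj x w)
    (hx : x ∉ matVerts N) (hwz : s(w, z) ∈ N) :
    IsMaximumMatching G (N \ {s(w, z)} ∪ {s(x, w)}) := by
  have hw : w ∉ matVerts (N \ {s(w, z)}) := by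
    rintro ⟨f, ⟨hf, hfwz⟩, hwf⟩
    exact hfwz (hN.1.eq_of_mem hf hwz hwf (Sym2.mem_mk_left w z))
  rw [Set.union_singleton]
  refine hN.of_ncard_eq ((hN.1.mono Set.sdiff_subset).insert hxw
    (fun h => hx (matVerts_mono Set.sdiff_subset h)) hw) ?_
  exact Set.ncard_exchange (fun h => hx ⟨_, h, Sym2.mem_mk_left x w⟩) hwz

end Matchings

section Bipartite

variable {G : SimpleGraph V} {A B : Set V} {M N N' : Set (Sym2 V)} {u v x w z : V}

lemma IsBipartition.mem_or_mem (hbip : IsBipartition G A B) (v : V) : v ∈ A ∨ v ∈ B := by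
  rw [← Set.mem_union, hbip.2.1]
  trivial

lemma IsBipartition.mem_right_of_adj (hbip : IsBipartition G A B) (h : G.Adj u v) (hu : u ∈ A) :
    v ∈ B :=
  ((hbip.2.2 h).resolve_right fun h' => Set.disjoint_left.mp hbip.1 hu h'.1).2

lemma IsBipartition.mem_left_of_adj (hbip : IsBipartition G A B) (h : G.Adj u v) (hu : u ∈ B) :
    v ∈ A :=
  ((hbip.2.2 h).resolve_left fun h' => Set.disjoint_left.mp hbip.1 h'.1 hu).2

lemma DMarc.of_notMem (hbip : IsBipartition G A B) (h : G.Adj u v) (hu : u ∈ A)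
    (huv : s(u, v) ∉ M) : DMarc G A B M u v :=
  ⟨h, .inl ⟨hu, hbip.mem_right_of_adj h hu, huv⟩⟩

lemma DMarc.of_mem (hbip : IsBipartition G A B) (h : G.Adj u v) (hu : u ∈ B)
    (huv : s(u, v) ∈ M) : DMarc G A B M u v :=
  ⟨h, .inr ⟨hu, hbip.mem_left_of_adj h hu, huv⟩⟩

lemma EdgeExchange.of_adj (hbip : IsBipartition G A B) (hxw : G.Adj x w) (hx : x ∉ matVerts N)
    (hwz : s(w, z) ∈ N) : EdgeExchange G A B N (N \ {s(w, z)} ∪ {s(x, w)}) := by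
  rcases hbip.mem_or_mem x with hxA | hxB
  · exact .inl ⟨x, z, w, hxA, hx, Sym2.eq_swap ▸ hwz, hxw, by rw [Sym2.eq_swap (a := z)]⟩
  · exact .inr ⟨x, w, z, hxB, hx, hwz, hxw.symm, by rw [Sym2.eq_swap (a := w) (b := x)]⟩

theorem eq_of_matVerts_eq_of_dMAcyclic [Finite V] (hbip : IsBipartition G A B)
    (hacyc : DMAcyclic G A B M) (hN : IsMatchingSet G N) (hN' : IsMatchingSet G N')
    (hV : matVerts N = matVerts N') (hNM : N \ N' ⊆ M) (hMN : M ∩ N' ⊆ N) : N = N' := by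
  have hW : matVerts (N' \ N) = ∅ := by
    refine eq_empty_of_forall_exists_rel_of_acyclic hacyc fun x hx => ?_
    rcases hbip.mem_or_mem x with hxA | hxB
    · obtain ⟨e, ⟨heN', heN⟩, hxe⟩ := hx
      obtain ⟨y, rfl⟩ := Sym2.mem_iff_exists.mp hxe
      exact ⟨y, ⟨_, ⟨heN', heN⟩, Sym2.mem_mk_right x y⟩,
        DMarc.of_notMem hbip (hN'.1 heN') hxA fun heM => heN (hMN ⟨heM, heN'⟩)⟩
    · obtain ⟨e, ⟨heN, heN'⟩, hxe⟩ := hN'.matVerts_sdiff_subset hV.ge hx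
      obtain ⟨y, rfl⟩ := Sym2.mem_iff_exists.mp hxe
      exact ⟨y, hN.matVerts_sdiff_subset hV.le ⟨_, ⟨heN, heN'⟩, Sym2.mem_mk_right x y⟩,
        DMarc.of_mem hbip (hN.1 heN) hxB (hNM ⟨heN, heN'⟩)⟩
  have hN'N : N' \ N = ∅ := eq_empty_of_matVerts_eq_empty hW
  have hNN' : N \ N' = ∅ :=
    eq_empty_of_matVerts_eq_empty (Set.subset_eq_empty (hN.matVerts_sdiff_subset hV.le) hW)
  exact (Set.sdiff_eq_empty.mp hNN').antisymm (Set.sdiff_eq_empty.mp hN'N)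

theorem exists_mem_matVerts_notMem_of_dMAcyclic [Finite V] (hbip : IsBipartition G A B)
    (hacyc : DMAcyclic G A B M) (hN : IsMaximumMatching G N) (hN' : IsMaximumMatching G N')
    (hNM : N \ N' ⊆ M) (hMN : M ∩ N' ⊆ N) (hNN' : N ≠ N') : ∃ x ∈ matVerts N', x ∉ matVerts N := by
  by_contra! hsub
  have hcard : (matVerts N).ncard ≤ (matVerts N').ncard := by
    rw [hN.1.ncard_matVerts, hN'.1.ncard_matVerts, hN.ncard_eq hN']
  exact hNN' (eq_of_matVerts_eq_of_dMAcyclic hbip hacyc hN.1 hN'.1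
    (Set.eq_of_subset_of_ncard_le hsub hcard).symm hNM hMN)

theorem reflTransGen_edgeExchange [Finite V] (hbip : IsBipartition G A B)
    (hacyc : DMAcyclic G A B M) (hN' : IsMaximumMatching G N') (hN : IsMaximumMatching G N)
    (hNM : N \ N' ⊆ M) (hMN : M ∩ N' ⊆ N) : ReflTransGen (EdgeExchange G A B) N N' := by
  induction hn : (N \ N').ncard using Nat.strong_induction_on generalizing N with
  | _ n ih =>
  by_cases hNN' : N = N'
  · exact hNN' ▸ .refl
  obtain ⟨x, hxN', hxN⟩ :=
    exists_mem_matVerts_notMem_of_dMAcyclic hbip hacyc hN hN' hNM hMN hNN'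
  obtain ⟨e, heN', hxe⟩ := hxN'
  obtain ⟨w, rfl⟩ := Sym2.mem_iff_exists.mp hxe
  have hxw : G.Adj x w := hN'.1.1 heN'
  obtain ⟨f, hfN, hwf⟩ := hN.mem_matVerts_of_adj hxw hxN
  obtain ⟨z, rfl⟩ := Sym2.mem_iff_exists.mp hwf
  have hwzN' : s(w, z) ∉ N' := fun h => hxN ⟨s(w, z), hfN,
    hN'.1.eq_of_mem heN' h (Sym2.mem_mk_right x w) (Sym2.mem_mk_left w z) ▸ Sym2.mem_mk_left x w⟩
  have hdiff : (N \ {s(w, z)} ∪ {s(x, w)}) \ N' = (N \ N') \ {s(w, z)} :=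
    sdiff_singleton_union_singleton_sdiff heN'
  refine .head (EdgeExchange.of_adj hbip hxw hxN hfN)
    (ih _ ?_ (hN.exchange hxw hxN hfN) ?_ ?_ rfl)
  · rw [hdiff, ← hn]
    exact Set.ncard_sdiff_singleton_lt_of_mem ⟨hfN, hwzN'⟩
  · rw [hdiff]
    exact Set.sdiff_subset.trans hNM
  · intro g hg
    exact .inl ⟨hMN hg, fun hgwz => hwzN' (Set.mem_singleton_iff.mp hgwz ▸ hg.2)⟩

end Bipartite

/-- If `D(M)` is acyclic, then every maximum matching arises from `M` by a finite
sequence of edge exchanges. -/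
theorem stmt11 [Fintype V] (G : SimpleGraph V) (A B : Set V) (hbip : IsBipartition G A B)
    (M : Set (Sym2 V)) (hM : IsMaximumMatching G M) (hacyc : DMAcyclic G A B M) :
    ∀ M', IsMaximumMatching G M' → Relation.ReflTransGen (EdgeExchange G A B) M M' :=
  fun _ hM' => reflTransGen_edgeExchange hbip hacyc hM' hM Set.sdiff_subset Set.inter_subset_left
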